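/- arXiv:2104.02675 — 5 statements merged into one kernel-verified Lean document; each statement's English description precedes it below -/
import Mathlib

section
/- Let (W,S) be a Coxeter system and J ⊆ S. If y, z ∈ W satisfy y ≤_R z in the right weak order, then the minimal-length coset representatives satisfy ᴶy ≤_R ᴶz. -/
namespace CoxPop

variable {B W : Type*} [Group W] {M : CoxeterMatrix B} (cs : CoxeterSystem M W)

/-- The standard parabolic subgroup generated by the simple reflections indexed by `J`. -/
def parabolic (J : Set B) : Subgroup W :=
  Subgroup.closure (cs.simple '' J)

/-- The right descent set of `w`. -/
def D (w : W) : Set B := {i | cs.IsRightDescent w i}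

/-- `u` is a longest element of the standard parabolic subgroup `W_J`. -/
def IsLongestIn (J : Set B) (u : W) : Prop :=
  u ∈ parabolic cs J ∧ ∀ v ∈ parabolic cs J, cs.length v ≤ cs.length u

open Classical in
/-- The longest element `w₀(J)` of the standard parabolic subgroup `W_J`. -/
noncomputable def w0 (J : Set B) : W :=
  if h : ∃ u, IsLongestIn cs J u then h.choose else 1

/-- The Coxeter pop-stack-sorting operator: `Pop w = w * w₀(D_R(w))`. -/
noncomputable def Pop (w : W) : W := w * w0 cs (D cs w)

/-- The right weak order on `W`: `x ≤_R y` iff `ℓ(x) + ℓ(x⁻¹y) = ℓ(y)`. -/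
def rweakLE (x y : W) : Prop := cs.length x + cs.length (x⁻¹ * y) = cs.length y

/-- `u` is the minimal-length representative `ᴶw` of the right coset `W_J w`. -/
def IsMinRep (J : Set B) (w u : W) : Prop :=
  (∃ p ∈ parabolic cs J, u = p * w) ∧
    ∀ v : W, (∃ p ∈ parabolic cs J, v = p * w) → cs.length u ≤ cs.length v

/-- A map `f : W → W` is compulsive if `f(w) ≤_R w` and `f(w) ≤_R ws` for every
right descent `s` of `w`. -/
def Compulsive (f : W → W) : Prop :=
  ∀ w : W, rweakLE cs (f w) w ∧ ∀ i ∈ D cs w, rweakLE cs (f w) (w * cs.simple i)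

/-- The strong Bruhat order: `x ≤ y` iff some reduced word for `y` contains a
reduced word for `x` as a (not necessarily contiguous) subword. -/
def bruhatLE (x y : W) : Prop :=
  ∃ ω : List B, cs.wordProd ω = y ∧ ω.length = cs.length y ∧
    ∃ ω' : List B, ω'.Sublist ω ∧ cs.wordProd ω' = x ∧ ω'.length = cs.length x

/-- The Coxeter system is irreducible: its Coxeter diagram is connected, i.e. the
index set admits no nontrivial partition into two mutually commuting parts. -/
def Irreducible : Prop :=
  ∀ J : Set B, (∀ i ∈ J, ∀ j ∈ Jᶜ, M i j = 2) → J = ∅ ∨ J = Set.univ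

/-! The proof reduces to a single step `z = y * s i` with `ℓ (y * s i) = ℓ y + 1`, since a
reduced word for `y⁻¹ * z` walks from `y` to `z` upwards in the right weak order. Every element
of the coset `W_J y` has the form `p * ᴶy` with `ℓ (p * ᴶy) = ℓ p + ℓ ᴶy`; from this, Deodhar's
lemma follows: `ᴶ(y * s i)` is either `ᴶy * s i` or `ᴶy`, and in both cases it lies above `ᴶy`.

Both steps rest on the exchange condition, which is derived from Tits' action of `W` on
`W × ZMod 2`: it shows that the parity of the number of occurrences of a reflection in the left
inversion sequence of a word only depends on the product of the word. -/

open CoxeterSystem List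

local prefix:100 "s" => cs.simple
local prefix:100 "π" => cs.wordProd
local prefix:100 "ℓ" => cs.length
local prefix:100 "lis" => cs.leftInvSeq

lemma prod_map_alternatingWord_two_mul {G : Type*} [Monoid G] (f : B → G) (i j : B) (m : ℕ) :
    ((alternatingWord i j (2 * m)).map f).prod = (f i * f j) ^ m := by
  induction m with
  | zero => simp [alternatingWord]
  | succ m ih =>
    rw [mul_add_one, alternatingWord_succ', alternatingWord_succ', if_neg (by simp [parity_simps]),
      if_pos (by simp), map_cons, map_cons, prod_cons, prod_cons, ih, pow_succ', mul_assoc]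

lemma wordProd_alternatingWord_two_mul (i j : B) :
    π (alternatingWord i j (2 * M i j)) = 1 := by
  rw [wordProd, prod_map_alternatingWord_two_mul, simple_mul_simple_pow]

section TitsAction

variable [DecidableEq W]

def reflAction (i : B) : Equiv.Perm (W × ZMod 2) :=
  Function.Involutive.toPerm (fun p => (s i * p.1 * s i, p.2 + if p.1 = s i then 1 else 0))
    fun ⟨t, ε⟩ => by
      have hconj : s i * t * s i = s i ↔ t = s i := by
        rw [mul_eq_right, mul_eq_one_iff_eq_inv', inv_simple]
      ext
      · simp [mul_assoc]
      · simp only [hconj, add_assoc, CharTwo.add_self_eq_zero, add_zero]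

lemma reflAction_apply (i : B) (p : W × ZMod 2) :
    reflAction cs i p = (s i * p.1 * s i, p.2 + if p.1 = s i then 1 else 0) := rfl

lemma prod_map_reflAction_apply (ω : List B) (t : W) (ε : ZMod 2) :
    (ω.map (reflAction cs)).prod (t, ε) =
      (π ω * t * (π ω)⁻¹, ε + ((lis ω).count (π ω * t * (π ω)⁻¹) : ZMod 2)) := by
  induction ω with
  | nil => simp
  | cons i ω ih =>
    simp only [map_cons, prod_cons, Equiv.Perm.mul_apply, ih, reflAction_apply, wordProd_cons,
      mul_inv_rev, inv_simple]
    set x := π ω * t * (π ω)⁻¹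
    have hcount : (lis (i :: ω)).count (s i * x * s i) =
        (lis ω).count x + if x = s i then 1 else 0 := by
      have hconj : MulAut.conj (s i) x = s i * x * s i := by simp
      rw [leftInvSeq, count_cons, ← hconj,
        count_map_of_injective _ _ (MulAut.conj (s i)).injective, hconj]
      simp [eq_comm (a := s i), mul_eq_right, mul_eq_one_iff_eq_inv']
    have hx : s i * π ω * t * ((π ω)⁻¹ * s i) = s i * x * s i := by simp only [x]; group
    rw [hx, hcount, Nat.cast_add, Nat.cast_ite, Nat.cast_one, Nat.cast_zero, add_assoc]

/-- The left inversion sequence of `(s i * s j) ^ M i j` repeats itself after `M i j` terms. -/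
lemma even_count_leftInvSeq_alternatingWord (i j : B) (t : W) :
    Even ((lis (alternatingWord i j (2 * M i j))).count t) := by
  set L := lis (alternatingWord i j (2 * M i j))
  have hL : L.length = 2 * M i j := by simp [L]
  have hperiod : L.drop (M i j) = L.take (M i j) := by
    refine List.ext_getElem (by simp [hL]; omega) fun k h₁ h₂ => ?_
    simp only [length_take, hL] at h₂
    simp only [getElem_drop, getElem_take, L]
    rw [getElem_leftInvSeq_alternatingWord _ _ _ _ _ (by omega),
      getElem_leftInvSeq_alternatingWord _ _ _ _ _ (by omega), prod_alternatingWord_eq_mul_pow,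
      prod_alternatingWord_eq_mul_pow, show (2 * (M i j + k) + 1) / 2 = M i j + k by omega,
      show (2 * k + 1) / 2 = k by omega, pow_add, simple_mul_simple_pow', one_mul]
    simp [parity_simps]
  rw [← take_append_drop (M i j) L, count_append, hperiod]
  exact ⟨_, rfl⟩

lemma isLiftable_reflAction : M.IsLiftable (reflAction cs) := by
  intro i j
  ext ⟨t, ε⟩ : 1
  rw [← prod_map_alternatingWord_two_mul, prod_map_reflAction_apply,
    wordProd_alternatingWord_two_mul, one_mul, inv_one, mul_one,
    (even_count_leftInvSeq_alternatingWord cs i j t).natCast_zmod_two, add_zero]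
  rfl

lemma count_leftInvSeq_congr {ω ω' : List B} (h : π ω = π ω') (t : W) :
    ((lis ω).count t : ZMod 2) = (lis ω').count t := by
  let ρ : W →* Equiv.Perm (W × ZMod 2) := cs.lift ⟨reflAction cs, isLiftable_reflAction cs⟩
  have hρ (ω : List B) : ρ (π ω) = (ω.map (reflAction cs)).prod := by
    rw [wordProd, map_list_prod, map_map]
    congr 1
    exact map_congr_left fun i _ => cs.lift_apply_simple (isLiftable_reflAction cs) i
  have key := congrArg (fun g : Equiv.Perm (W × ZMod 2) => (g ((π ω)⁻¹ * t * π ω, 0)).2)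
    ((hρ ω).symm.trans ((congrArg ρ h).trans (hρ ω')))
  simpa [prod_map_reflAction_apply, h, mul_assoc] using key

end TitsAction

section

variable {cs}

/-- The exchange condition: `s i` occurs an odd number of times in the left inversion sequence
of `i :: ω'` for a reduced word `ω'` of `s i * π ω`, hence also in that of `ω`. -/
theorem exists_eraseIdx_of_isLeftDescent {ω : List B} {i : B} (h : cs.IsLeftDescent (π ω) i) :
    ∃ k < ω.length, s i * π ω = π (ω.eraseIdx k) := by
  classical
  obtain ⟨ω', hred, hω'⟩ := cs.exists_isReduced (s i * π ω)
  have hnot : s i ∉ lis ω' := fun hmem => by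
    have := (cs.isLeftInversion_of_mem_leftInvSeq hred hmem).2
    rw [← hω', simple_mul_simple_cancel_left] at this
    exact lt_asymm h this
  have hodd : ((lis ω).count (s i) : ZMod 2) = 1 := by
    have hconj := count_map_of_injective (lis ω') _ (MulAut.conj (s i)).injective (s i)
    rw [MulAut.conj_apply, mul_inv_cancel_right, count_eq_zero.mpr hnot] at hconj
    rw [count_leftInvSeq_congr cs (ω' := i :: ω')
      (by rw [wordProd_cons, ← hω', simple_mul_simple_cancel_left]), leftInvSeq, count_cons, hconj]
    simp
  have hmem : s i ∈ lis ω := by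
    by_contra hnot'
    rw [count_eq_zero.mpr hnot'] at hodd
    exact zero_ne_one hodd
  obtain ⟨k, hk, hki⟩ := mem_iff_getElem.mp hmem
  refine ⟨k, by simpa using hk, ?_⟩
  rw [← getD_leftInvSeq_mul_wordProd, getD_eq_getElem _ _ hk, hki]

theorem simple_mul_eq_mul_simple_of_length_eq {w : W} {i j : B} (hj : ℓ (s j * w) = ℓ w + 1)
    (hi : ℓ (w * s i) = ℓ w + 1) (hji : ℓ (s j * w * s i) = ℓ w) : s j * w = w * s i := by
  obtain ⟨ω, hred, rfl⟩ := cs.exists_isReduced w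
  have hdesc : cs.IsLeftDescent (π (ω ++ [i])) j := by
    rw [IsLeftDescent, wordProd_append, wordProd_singleton, ← mul_assoc, hji, hi]
    omega
  obtain ⟨k, hk, hke⟩ := exists_eraseIdx_of_isLeftDescent hdesc
  rw [wordProd_append, wordProd_singleton, ← mul_assoc] at hke
  rcases lt_or_ge k ω.length with hlt | hge
  · rw [eraseIdx_append_of_lt_length hlt, wordProd_append, wordProd_singleton,
      mul_left_inj] at hke
    have := cs.length_wordProd_le (ω.eraseIdx k)
    rw [← hke, hj, hred.eq, length_eraseIdx_of_lt hlt] at this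
    omega
  · have hk : k - ω.length = 0 := by rw [length_append, length_singleton] at hk; omega
    rw [eraseIdx_append_of_length_le hge, hk, eraseIdx_cons_zero, append_nil] at hke
    nth_rw 2 [← hke]
    rw [simple_mul_simple_cancel_right]

section Parabolic

variable {J : Set B}

lemma simple_mem_parabolic {j : B} (hj : j ∈ J) : s j ∈ parabolic cs J :=
  Subgroup.subset_closure ⟨j, hj, rfl⟩

lemma exists_isReduced_simple_mul {j : B} (hj : j ∈ J) {ω : List B} (hωJ : ∀ b ∈ ω, b ∈ J)
    (hred : cs.IsReduced ω) :
    ∃ ω' : List B, (∀ b ∈ ω', b ∈ J) ∧ cs.IsReduced ω' ∧ π ω' = s j * π ω := by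
  rcases cs.length_simple_mul (π ω) j with hlen | hlen
  · refine ⟨j :: ω, forall_mem_cons.mpr ⟨hj, hωJ⟩, ?_, wordProd_cons ..⟩
    rw [CoxeterSystem.IsReduced, wordProd_cons, hlen, hred.eq, length_cons]
  · obtain ⟨k, hk, hke⟩ :=
      exists_eraseIdx_of_isLeftDescent (show cs.IsLeftDescent (π ω) j by
        rw [IsLeftDescent]; omega)
    refine ⟨ω.eraseIdx k, fun b hb => hωJ b ((eraseIdx_sublist ω k).subset hb), ?_, hke.symm⟩
    rw [CoxeterSystem.IsReduced, ← hke]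
    have := length_eraseIdx_add_one hk
    have := hred.eq
    omega

lemma exists_isReduced_of_mem_parabolic {p : W} (hp : p ∈ parabolic cs J) :
    ∃ ω : List B, (∀ j ∈ ω, j ∈ J) ∧ cs.IsReduced ω ∧ π ω = p := by
  induction hp using Subgroup.closure_induction_left with
  | one => exact ⟨[], by simp, by simp [CoxeterSystem.IsReduced], rfl⟩
  | mul_left _ hx _ _ ih =>
    obtain ⟨j, hj, rfl⟩ := hx
    obtain ⟨ω, hωJ, hred, rfl⟩ := ih
    exact exists_isReduced_simple_mul hj hωJ hred
  | inv_mul_cancel _ hx _ _ ih =>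
    obtain ⟨j, hj, rfl⟩ := hx
    obtain ⟨ω, hωJ, hred, rfl⟩ := ih
    rw [inv_simple]
    exact exists_isReduced_simple_mul hj hωJ hred

lemma wordProd_mem_parabolic {ω : List B} (hω : ∀ j ∈ ω, j ∈ J) : π ω ∈ parabolic cs J :=
  Subgroup.list_prod_mem _ (by simpa using fun j hj => simple_mem_parabolic (hω j hj))

lemma length_mul_of_forall_le_length_mul {u : W}
    (hu : ∀ p ∈ parabolic cs J, ℓ u ≤ ℓ (p * u)) {p : W} (hp : p ∈ parabolic cs J) :
    ℓ (p * u) = ℓ p + ℓ u := by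
  obtain ⟨ω, hωJ, hred, rfl⟩ := exists_isReduced_of_mem_parabolic hp
  rw [hred.eq]
  clear hp
  induction ω with
  | nil => simp
  | cons j ω ih =>
    have hωJ' : ∀ b ∈ ω, b ∈ J := fun b hb => hωJ b (mem_cons_of_mem j hb)
    have hω := ih hωJ' (hred.drop 1)
    rw [wordProd_cons, mul_assoc, length_cons]
    suffices ¬ cs.IsLeftDescent (π ω * u) j by
      rcases cs.length_simple_mul (π ω * u) j with h | h
      · omega
      · exact absurd (by rw [IsLeftDescent]; omega) this
    intro hdesc
    obtain ⟨ωu, hωu, rfl⟩ := cs.exists_isReduced u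
    rw [← wordProd_append] at hdesc
    obtain ⟨k, hk, hke⟩ := exists_eraseIdx_of_isLeftDescent hdesc
    rw [length_append] at hk
    rcases lt_or_ge k ω.length with hlt | hge
    · rw [eraseIdx_append_of_lt_length hlt, wordProd_append, wordProd_append, ← mul_assoc,
        mul_left_inj] at hke
      have := cs.length_wordProd_le (ω.eraseIdx k)
      rw [← hke, ← wordProd_cons, hred.eq, length_eraseIdx_of_lt hlt, length_cons] at this
      omega
    · rw [eraseIdx_append_of_length_le hge, wordProd_append, wordProd_append, ← mul_assoc,
        ← inv_mul_eq_iff_eq_mul, ← mul_assoc, ← mul_assoc] at hke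
      have hconj : (π ω)⁻¹ * s j * π ω ∈ parabolic cs J :=
        mul_mem (mul_mem (inv_mem (wordProd_mem_parabolic hωJ'))
          (simple_mem_parabolic (hωJ j mem_cons_self))) (wordProd_mem_parabolic hωJ')
      have hle := hu _ hconj
      have := cs.length_wordProd_le (ωu.eraseIdx (k - ω.length))
      rw [hke, hωu.eq] at hle
      rw [length_eraseIdx_of_lt (by omega)] at this
      omega

end Parabolic

section RightWeakOrder

variable {x y z : W}

lemma rweakLE_refl (x : W) : rweakLE cs x x := by
  simp [rweakLE]

lemma rweakLE_mul_simple {i : B} (h : ℓ (x * s i) = ℓ x + 1) : rweakLE cs x (x * s i) := by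
  rw [rweakLE, inv_mul_cancel_left, length_simple, h]

lemma rweakLE.trans (hxy : rweakLE cs x y) (hyz : rweakLE cs y z) : rweakLE cs x z := by
  have h₁ := cs.length_mul_le (x⁻¹ * y) (y⁻¹ * z)
  have h₂ := cs.length_mul_le x (x⁻¹ * z)
  rw [mul_assoc, mul_inv_cancel_left] at h₁
  rw [mul_inv_cancel_left] at h₂
  unfold rweakLE at *
  omega

end RightWeakOrder

section MinRep

variable {J : Set B} {w u : W}

lemma IsMinRep.le_length_mul (hu : IsMinRep cs J w u) {p : W} (hp : p ∈ parabolic cs J) :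
    ℓ u ≤ ℓ (p * u) := by
  obtain ⟨⟨p₀, hp₀, rfl⟩, hmin⟩ := hu
  exact hmin _ ⟨p * p₀, mul_mem hp hp₀, (mul_assoc ..).symm⟩

lemma IsMinRep.length_mul (hu : IsMinRep cs J w u) {p : W} (hp : p ∈ parabolic cs J) :
    ℓ (p * u) = ℓ p + ℓ u :=
  length_mul_of_forall_le_length_mul (fun _ hq => hu.le_length_mul hq) hp

lemma IsMinRep.eq_of_length_le (hu : IsMinRep cs J w u) {p : W} (hp : p ∈ parabolic cs J)
    (h : ℓ (p * w) ≤ ℓ u) : p * w = u := by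
  obtain ⟨p₀, hp₀, hu₀⟩ := hu.1
  have hpw : p * w = p * p₀⁻¹ * u := by rw [hu₀]; group
  have hadd := hu.length_mul (mul_mem hp (inv_mem hp₀))
  rw [← hpw] at hadd
  rw [hpw, cs.length_eq_zero_iff.mp (show ℓ (p * p₀⁻¹) = 0 by omega), one_mul]

lemma IsMinRep.unique {v : W} (hu : IsMinRep cs J w u) (hv : IsMinRep cs J w v) : v = u := by
  obtain ⟨q, hq, rfl⟩ := hv.1
  exact hu.eq_of_length_le hq (hv.2 u hu.1)

lemma exists_isMinRep (J : Set B) (w : W) : ∃ u, IsMinRep cs J w u := by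
  obtain ⟨u, hu, hmin⟩ := (measure cs.length).wf.has_min {v | ∃ p ∈ parabolic cs J, v = p * w}
    ⟨w, 1, one_mem _, (one_mul w).symm⟩
  exact ⟨u, hu, fun v hv => not_lt.mp (hmin v hv)⟩

lemma IsMinRep.length_mul_simple (hu : IsMinRep cs J w u) {i : B}
    (h : ℓ (w * s i) = ℓ w + 1) : ℓ (u * s i) = ℓ u + 1 := by
  obtain ⟨p, hp, hpu⟩ := hu.1
  have hw : w = p⁻¹ * u := by rw [hpu, inv_mul_cancel_left]
  have hadd := hu.length_mul (inv_mem hp)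
  have := cs.length_mul_le p⁻¹ (u * s i)
  rw [← mul_assoc, ← hw] at this
  rw [← hw] at hadd
  rcases cs.length_mul_simple u i with h' | h' <;> omega

/-- Deodhar's lemma. -/
lemma IsMinRep.mul_simple_eq (hu : IsMinRep cs J w u) {i : B} (hus : ℓ (u * s i) = ℓ u + 1)
    {v : W} (hv : IsMinRep cs J (w * s i) v) : v = u * s i ∨ v = u := by
  obtain ⟨p, hp, hpu⟩ := hu.1
  obtain ⟨q, hq, hqv⟩ := hv.1
  have hpus : p * (w * s i) = u * s i := by rw [hpu, mul_assoc]
  have hvs : v * s i = q * w := by rw [hqv, mul_assoc, simple_mul_simple_cancel_right]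
  have hv_le : ℓ v ≤ ℓ u + 1 := hus ▸ hv.2 _ ⟨p, hp, hpus.symm⟩
  have hu_le : ℓ u ≤ ℓ (v * s i) := hu.2 _ ⟨q, hq, hvs⟩
  by_cases hlong : ℓ u + 1 ≤ ℓ v
  · exact .inl ((hv.eq_of_length_le hp (by rw [hpus]; omega)).symm.trans hpus)
  by_cases hshort : ℓ (v * s i) ≤ ℓ u
  · left
    rw [← hu.eq_of_length_le hq (hvs ▸ hshort), ← hvs, simple_mul_simple_cancel_right]
  right
  have hvu : v * s i = q * p⁻¹ * u := by rw [hvs, hpu]; group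
  have hadd := hu.length_mul (mul_mem hq (inv_mem hp))
  rw [← hvu] at hadd
  have hlen := cs.length_mul_simple v i
  obtain ⟨k, hk⟩ := cs.length_eq_one_iff.mp (show ℓ (q * p⁻¹) = 1 by omega)
  rw [hk] at hvu hadd
  have hcomm := simple_mul_eq_mul_simple_of_length_eq (by rw [← hvu]; omega) hus
    (by rw [← hvu, simple_mul_simple_cancel_right]; omega)
  exact mul_right_cancel (hvu.trans hcomm)

lemma IsMinRep.rweakLE_of_length_mul_wordProd {ω : List B} {y y' z' : W}
    (hy : IsMinRep cs J y y') (hz : IsMinRep cs J (y * π ω) z')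
    (hl : ℓ (y * π ω) = ℓ y + ω.length) : rweakLE cs y' z' := by
  induction ω generalizing y y' with
  | nil =>
    rw [wordProd_nil, mul_one] at hz
    rw [hy.unique hz]
    exact rweakLE_refl _
  | cons i ω ih =>
    rw [wordProd_cons, ← mul_assoc] at hz hl
    rw [length_cons] at hl
    have hyi : ℓ (y * s i) = ℓ y + 1 := by
      have := cs.length_mul_le (y * s i) (π ω)
      have := cs.length_wordProd_le ω
      rcases cs.length_mul_simple y i with h | h <;> omega
    obtain ⟨v, hv⟩ := exists_isMinRep J (y * s i)
    have hus := hy.length_mul_simple hyi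
    have hstep : rweakLE cs y' v := by
      rcases hy.mul_simple_eq hus hv with rfl | rfl
      · exact rweakLE_mul_simple hus
      · exact rweakLE_refl _
    exact hstep.trans (ih hv hz (by omega))

end MinRep

end

/-- taking minimal-length coset representatives is order-preserving for
the right weak order: if `y ≤_R z` then `ᴶy ≤_R ᴶz`. -/
theorem minRep_monotone (J : Set B) (y z y' z' : W)
    (hy : IsMinRep cs J y y') (hz : IsMinRep cs J z z')
    (hyz : rweakLE cs y z) : rweakLE cs y' z' := by
  obtain ⟨ω, hred, hω⟩ := cs.exists_isReduced (y⁻¹ * z)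
  have hz_eq : z = y * π ω := by rw [← hω, mul_inv_cancel_left]
  refine hy.rweakLE_of_length_mul_wordProd (hz_eq ▸ hz) ?_
  rw [← hz_eq, ← hyz, hω, hred.eq]

end CoxPop
end

section
/- In the dihedral Coxeter group I₂(m) (with m ≥ 2 finite), every element w satisfies Pop^{m−1}(w) = e, and the element α_{m−1} (the alternating product of m−1 simple generators ending in s₁) satisfies Pop^{m−2}(α_{m−1}) ≠ e. Hence the maximum forward orbit size of Pop on I₂(m) is exactly m. -/
/-!
By induction on length, every element of `I₂(m)` is the product of an alternating word of
its length `k`, and `k ≤ m`. Alternating words of length `k ≤ m` are reduced: in the dihedral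
group of order `4m`, with `s₁ ↦ sr (-1)` and `s₂ ↦ sr 1`, such a word maps to `r (±k)` or
`sr (±k)`, and these parameters are distinct for distinct `k ≤ m`. Hence for `0 < k < m` the
right descent set of an element of length `k` is its last letter alone and `Pop` lowers the
length by exactly one, while the unique element of length `m` is `w₀` and `Pop w₀ = w₀² = e`.
-/

namespace CoxPop

variable {B W : Type*} [Group W] {M : CoxeterMatrix B} (cs : CoxeterSystem M W)

/-- The alternating word `⋯ s₁ s₂ s₁` of length `k` ending in `s₁` (index `0`),
whose product is the element `α_k` of the dihedral group. -/
def dihedralAltWord (k : ℕ) : List (Fin 2) :=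
  (List.range k).map (fun j => if (k - 1 - j) % 2 = 0 then (0 : Fin 2) else 1)

open CoxeterSystem

section Pop

theorem w0_eq_of_isLongestIn {J : Set B} {u : W} (hu : IsLongestIn cs J u)
    (huniq : ∀ v, IsLongestIn cs J v → v = u) : w0 cs J = u := by
  have hex : ∃ v, IsLongestIn cs J v := ⟨u, hu⟩
  rw [w0, dif_pos hex]
  exact huniq _ hex.choose_spec

theorem w0_empty : w0 cs (∅ : Set B) = 1 := by
  have hbot : parabolic cs (∅ : Set B) = ⊥ := by simp [parabolic]
  refine w0_eq_of_isLongestIn cs ⟨one_mem _, fun v hv => ?_⟩ fun v hv => ?_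
  · rw [hbot, Subgroup.mem_bot] at hv
    simp [hv]
  · simpa [hbot] using hv.1

theorem mem_parabolic_singleton {i : B} {v : W} (hv : v ∈ parabolic cs {i}) :
    v = 1 ∨ v = cs.simple i := by
  rw [parabolic, Set.image_singleton] at hv
  induction hv using Subgroup.closure_induction with
  | mem x hx => exact Or.inr hx
  | one => exact Or.inl rfl
  | mul x y _ _ hx hy =>
    rcases hx with rfl | rfl <;> rcases hy with rfl | rfl <;> simp [cs.simple_mul_simple_self]
  | inv x _ hx => rcases hx with rfl | rfl <;> simp [cs.inv_simple]

theorem w0_singleton (i : B) : w0 cs {i} = cs.simple i := by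
  have hmem : cs.simple i ∈ parabolic cs {i} := Subgroup.subset_closure (by simp)
  refine w0_eq_of_isLongestIn cs ⟨hmem, fun v hv => ?_⟩ fun v hv => ?_
  · rcases mem_parabolic_singleton cs hv with rfl | rfl <;> simp
  · rcases mem_parabolic_singleton cs hv.1 with rfl | rfl
    · simpa using hv.2 _ hmem
    · rfl

theorem Pop_one : Pop cs 1 = 1 := by
  have hD : D cs (1 : W) = ∅ := Set.eq_empty_of_forall_notMem cs.not_isRightDescent_one
  rw [Pop, hD, w0_empty, one_mul]

theorem Pop_eq_mul_simple_of_D_eq_singleton {w : W} {i : B} (h : D cs w = {i}) :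
    Pop cs w = w * cs.simple i := by
  rw [Pop, h, w0_singleton]

theorem Pop_eq_one_of_unique_longest {u : W} (hmax : ∀ v, cs.length v ≤ cs.length u)
    (huniq : ∀ v, cs.length v = cs.length u → v = u) : Pop cs u = 1 := by
  have hD : D cs u = Set.univ :=
    Set.eq_univ_of_forall fun i => lt_of_le_of_ne (hmax _) (cs.length_mul_simple_ne u i)
  have htop : parabolic cs (Set.univ : Set B) = ⊤ := by
    rw [parabolic, Set.image_univ, cs.subgroup_closure_range_simple]
  have hw0 : w0 cs Set.univ = u :=
    w0_eq_of_isLongestIn cs ⟨htop ▸ Subgroup.mem_top u, fun v _ => hmax v⟩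
      fun v hv => huniq v (le_antisymm (hmax v) (hv.2 u (htop ▸ Subgroup.mem_top u)))
  have hinv : u⁻¹ = u := huniq _ (cs.length_inv u)
  rw [Pop, hD, hw0]
  nth_rewrite 2 [← hinv]
  exact mul_inv_cancel u

end Pop

section Dihedral

theorem _root_.Fin.two_eq_of_ne_of_ne {a b i : Fin 2} (hab : a ≠ b) (hib : i ≠ b) : i = a := by
  omega

theorem wordProd_alternatingWord_mul_simple {M : CoxeterMatrix (Fin 2)} (cs : CoxeterSystem M W)
    (a b : Fin 2) (k : ℕ) :
    cs.wordProd (alternatingWord a b k) * cs.simple a =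
      cs.wordProd (alternatingWord b a (k + 1)) := by
  rw [alternatingWord_succ, wordProd_concat]

theorem exists_eq_wordProd_alternatingWord {M : CoxeterMatrix (Fin 2)} (cs : CoxeterSystem M W)
    (w : W) : ∃ a b : Fin 2, a ≠ b ∧ w = cs.wordProd (alternatingWord a b (cs.length w)) := by
  generalize hk : cs.length w = k
  induction k generalizing w with
  | zero => exact ⟨0, 1, by decide, by simpa [alternatingWord] using hk⟩
  | succ k ih =>
    obtain ⟨i, hi⟩ := cs.exists_rightDescent_of_ne_one (w := w) fun h => by simp [h] at hk
    have hlen : cs.length (w * cs.simple i) = k := by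
      have := cs.isRightDescent_iff.mp hi
      omega
    obtain ⟨a, b, hab, hwi⟩ := ih _ hlen
    have hw : w = cs.wordProd (alternatingWord a b k) * cs.simple i := by
      rw [← hwi, simple_mul_simple_cancel_right]
    by_cases hib : i = b
    · subst hib
      cases k with
      | zero => exact ⟨a, i, hab, by rw [hw, alternatingWord_succ, wordProd_concat]; rfl⟩
      | succ k =>
        -- `w` would be the product of the shorter word `alternatingWord i a k`
        rw [alternatingWord_succ, wordProd_concat, simple_mul_simple_cancel_right] at hw
        have := cs.length_wordProd_le (alternatingWord i a k)
        rw [length_alternatingWord, ← hw] at this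
        omega
    · obtain rfl := Fin.two_eq_of_ne_of_ne hab hib
      exact ⟨b, i, hab.symm, by rw [hw, wordProd_alternatingWord_mul_simple]⟩

def _root_.DihedralGroup.index {N : ℕ} : DihedralGroup N → ZMod N
  | .r i => i
  | .sr i => i

theorem _root_.DihedralGroup.index_mul_sr {N : ℕ} (g : DihedralGroup N) (c : ZMod N) :
    (g * .sr c).index = c - g.index := by
  cases g <;> simp [DihedralGroup.index, DihedralGroup.r_mul_sr, DihedralGroup.sr_mul_sr]

@[simp]
theorem _root_.DihedralGroup.index_one {N : ℕ} : (1 : DihedralGroup N).index = 0 := rfl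

def simpleIndex {N : ℕ} : Fin 2 → ZMod N := ![-1, 1]

theorem simpleIndex_of_ne {N : ℕ} {a b : Fin 2} (hab : a ≠ b) :
    (simpleIndex a : ZMod N) = -simpleIndex b := by
  fin_cases a <;> fin_cases b <;> simp_all [simpleIndex]

theorem natCast_mul_simpleIndex_ne {N j k : ℕ} (hjk : j < k) (hk : 2 * k ≤ N) (b d : Fin 2) :
    (k : ZMod N) * simpleIndex b ≠ (j : ZMod N) * simpleIndex d := by
  have hsub : ((k - j : ℕ) : ZMod N) ≠ 0 := by
    rw [Ne, ZMod.natCast_eq_zero_iff]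
    exact fun h => absurd (Nat.le_of_dvd (by omega) h) (by omega)
  have hadd : ((k + j : ℕ) : ZMod N) ≠ 0 := by
    rw [Ne, ZMod.natCast_eq_zero_iff]
    exact fun h => absurd (Nat.le_of_dvd (by omega) h) (by omega)
  push_cast [Nat.cast_sub hjk.le] at hsub hadd
  fin_cases b <;> fin_cases d <;> simp [simpleIndex] <;> grind

variable {n : ℕ}

theorem isLiftable_I :
    (CoxeterMatrix.I n).IsLiftable
      fun i => DihedralGroup.sr (simpleIndex i : ZMod (2 * (n + 2))) := by
  intro i i'
  rw [DihedralGroup.sr_mul_sr, DihedralGroup.r_pow, ← DihedralGroup.r_zero]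
  have h : ((2 * (n + 2) : ℕ) : ZMod (2 * (n + 2))) = 0 := ZMod.natCast_self _
  push_cast at h
  congr 1
  fin_cases i <;> fin_cases i' <;> simp [CoxeterMatrix.I, simpleIndex] <;> grind

variable (cs : CoxeterSystem (CoxeterMatrix.I n) W)

def toDihedralGroup : W →* DihedralGroup (2 * (n + 2)) :=
  cs.lift ⟨_, isLiftable_I⟩

theorem index_toDihedralGroup_alternatingWord {a b : Fin 2} (hab : a ≠ b) (k : ℕ) :
    (toDihedralGroup cs (cs.wordProd (alternatingWord a b k))).index =
      (k : ZMod (2 * (n + 2))) * simpleIndex b := by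
  induction k generalizing a b with
  | zero => simp [alternatingWord]
  | succ k ih =>
    rw [alternatingWord_succ, wordProd_concat, map_mul, toDihedralGroup, lift_apply_simple,
      DihedralGroup.index_mul_sr, ← toDihedralGroup, ih hab.symm, simpleIndex_of_ne hab]
    push_cast
    ring

theorem length_wordProd_alternatingWord {a b : Fin 2} (hab : a ≠ b) {k : ℕ} (hk : k ≤ n + 2) :
    cs.length (cs.wordProd (alternatingWord a b k)) = k := by
  obtain ⟨c, d, hcd, h⟩ :=
    exists_eq_wordProd_alternatingWord cs (cs.wordProd (alternatingWord a b k))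
  refine le_antisymm (by simpa using cs.length_wordProd_le (alternatingWord a b k))
    (not_lt.mp fun hlt => natCast_mul_simpleIndex_ne (N := 2 * (n + 2)) hlt (by omega) b d ?_)
  have := congrArg (fun w => (toDihedralGroup cs w).index) h
  simpa only [index_toDihedralGroup_alternatingWord cs hab,
    index_toDihedralGroup_alternatingWord cs hcd] using this

theorem _root_.CoxeterMatrix.I_apply_of_ne {a b : Fin 2} (hab : a ≠ b) :
    CoxeterMatrix.I n a b = n + 2 := by
  simp [CoxeterMatrix.I, hab]

theorem length_le (w : W) : cs.length w ≤ n + 2 := by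
  obtain ⟨a, b, hab, hw⟩ := exists_eq_wordProd_alternatingWord cs w
  by_contra! h
  refine cs.not_isReduced_alternatingWord a b (by simp [CoxeterMatrix.I_apply_of_ne hab])
    (by rwa [CoxeterMatrix.I_apply_of_ne hab]) ?_
  rw [CoxeterSystem.IsReduced, length_alternatingWord, ← hw]

theorem eq_wordProd_alternatingWord_of_length_eq {w : W} (hw : cs.length w = n + 2) :
    w = cs.wordProd (alternatingWord 0 1 (n + 2)) := by
  obtain ⟨a, b, hab, hw'⟩ := exists_eq_wordProd_alternatingWord cs w
  rw [hw', hw]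
  fin_cases a <;> fin_cases b
  · exact absurd rfl hab
  · rfl
  · exact cs.wordProd_braidWord_eq 1 0
  · exact absurd rfl hab

theorem D_wordProd_alternatingWord {a b : Fin 2} (hab : a ≠ b) {k : ℕ} (hk0 : 0 < k)
    (hk : k < n + 2) : D cs (cs.wordProd (alternatingWord a b k)) = {b} := by
  obtain ⟨k, rfl⟩ : ∃ k', k = k' + 1 := ⟨k - 1, by omega⟩
  ext i
  show cs.IsRightDescent _ i ↔ i = b
  unfold IsRightDescent
  constructor
  · intro hi
    by_contra hib
    obtain rfl := Fin.two_eq_of_ne_of_ne hab hib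
    rw [wordProd_alternatingWord_mul_simple, length_wordProd_alternatingWord cs hab.symm hk,
      length_wordProd_alternatingWord cs hab hk.le] at hi
    omega
  · rintro rfl
    rw [← wordProd_alternatingWord_mul_simple cs i a k, simple_mul_simple_cancel_right,
      wordProd_alternatingWord_mul_simple, length_wordProd_alternatingWord cs hab.symm (by omega),
      length_wordProd_alternatingWord cs hab (by omega)]
    omega

theorem length_Pop_of_length_lt {w : W} (hw : cs.length w < n + 2) :
    cs.length (Pop cs w) = cs.length w - 1 := by
  rcases (cs.length w).eq_zero_or_pos with h0 | h0
  · rw [cs.length_eq_zero_iff.mp h0, Pop_one, length_one]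
  obtain ⟨a, b, hab, hw'⟩ := exists_eq_wordProd_alternatingWord cs w
  have hD : D cs w = {b} := by
    rw [hw']
    exact D_wordProd_alternatingWord cs hab h0 hw
  have hb : cs.IsRightDescent w b := show b ∈ D cs w from hD ▸ rfl
  rw [Pop_eq_mul_simple_of_D_eq_singleton cs hD]
  have := cs.isRightDescent_iff.mp hb
  omega

theorem length_iterate_Pop {w : W} (hw : cs.length w < n + 2) (j : ℕ) :
    cs.length ((Pop cs)^[j] w) = cs.length w - j := by
  induction j with
  | zero => rfl
  | succ j ih =>
    rw [Function.iterate_succ_apply', length_Pop_of_length_lt cs (by omega), ih]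
    omega

theorem iterate_Pop_eq_one (w : W) : (Pop cs)^[n + 1] w = 1 := by
  rcases (length_le cs w).lt_or_eq with hlt | heq
  · exact cs.length_eq_zero_iff.mp (by rw [length_iterate_Pop cs hlt]; omega)
  · have hlongest : ∀ v, cs.length v = cs.length w → v = w := fun v hv => by
      rw [eq_wordProd_alternatingWord_of_length_eq cs heq,
        eq_wordProd_alternatingWord_of_length_eq cs (hv.trans heq)]
    rw [Function.iterate_succ_apply,
      Pop_eq_one_of_unique_longest cs (fun v => heq ▸ length_le cs v) hlongest,
      Function.iterate_fixed (Pop_one cs)]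

end Dihedral

theorem dihedralAltWord_eq_alternatingWord (k : ℕ) :
    dihedralAltWord k = alternatingWord 1 0 k := by
  refine List.ext_getElem (by simp [dihedralAltWord]) fun j hj _ => ?_
  have hjk : j < k := by simpa [dihedralAltWord] using hj
  simp only [dihedralAltWord, List.getElem_map, List.getElem_range,
    getElem_alternatingWord _ _ _ _ hjk, Nat.even_iff]
  split_ifs <;> omega

/-- in the dihedral Coxeter group `I₂(m)` (`m ≥ 2`, realized as the
Coxeter group of the matrix `CoxeterMatrix.I₂ₘ (m - 2)`, whose off-diagonal entry is
`m`), every element `w` satisfies `Pop^[m-1] w = e`, while the alternating element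
`α_{m-1}` satisfies `Pop^[m-2] α_{m-1} ≠ e`. Hence the maximum forward orbit size of
`Pop` is exactly `m`. -/
theorem dihedral_pop_orbit {W : Type*} [Group W] (m : ℕ) (hm : 2 ≤ m)
    (cs : CoxeterSystem (CoxeterMatrix.I (m - 2)) W) :
    (∀ w : W, (Pop cs)^[m - 1] w = 1) ∧
      (Pop cs)^[m - 2] (cs.wordProd (dihedralAltWord (m - 1))) ≠ 1 := by
  obtain ⟨n, rfl⟩ : ∃ n, m = n + 2 := ⟨m - 2, by omega⟩
  refine ⟨iterate_Pop_eq_one cs, ?_⟩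
  show (Pop cs)^[n] (cs.wordProd (dihedralAltWord (n + 1))) ≠ 1
  have hα : cs.length (cs.wordProd (alternatingWord 1 0 (n + 1))) = n + 1 :=
    length_wordProd_alternatingWord cs (by decide) (by omega)
  rw [dihedralAltWord_eq_alternatingWord, Ne, ← cs.length_eq_zero_iff,
    length_iterate_Pop cs (by omega), hα]
  omega

end CoxPop
end

section
/- A permutation w ∈ S_n is 2-pop-stack-sortable (i.e., Pop²(w) = e) if and only if for every pair of consecutive descending runs δ_j, δ_{j+1} of w (read left to right), the largest entry of δ_j is at most 1 more than the smallest entry of δ_{j+1}. -/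
/-!
`Pop` reverses each descending run, so `Pop w` is the concatenation of the reversed runs, each
of them increasing. For a permutation `v` of `{0, …, n-1}`, `Pop v = e` iff `a ≤ b + 1` for all
adjacent entries `a, b` of `v`: then every run is a block of consecutive integers, and two
consecutive runs `δ, δ'` are disjoint such blocks with `min δ ≤ max δ'`, so `max δ < min δ'`
and `Pop v` is sorted. For `v = Pop w` the condition holds automatically inside each reversed
run, and at the junction of two of them it reads `max δ_j ≤ min δ_{j+1} + 1`.
-/

namespace PopList

/-- Decompose a one-line notation into its maximal descending runs. -/
def runs : List ℕ → List (List ℕ)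
  | [] => []
  | a :: l =>
    match runs l with
    | [] => [[a]]
    | r :: rs => if r.head! < a then (a :: r) :: rs else [a] :: r :: rs

/-- The pop-stack-sorting map on one-line notations: reverse every maximal
descending run. -/
def popL (l : List ℕ) : List ℕ := ((runs l).map List.reverse).flatten

section Lists

variable {α : Type*} {l : List α}

theorem isChain_and {R S : α → α → Prop} :
    l.IsChain (fun a b => R a b ∧ S a b) ↔ l.IsChain R ∧ l.IsChain S := by
  simp only [List.isChain_iff_getElem, forall_and]

variable [Inhabited α]

theorem head?_eq_some_head! (h : l ≠ []) : l.head? = some l.head! := by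
  cases l <;> simp_all

theorem getLast?_eq_some_getLast! (h : l ≠ []) : l.getLast? = some l.getLast! := by
  rw [List.getLast!_eq_getLast?_getD, List.getLast?_eq_some_getLast h, Option.getD_some]

theorem getLast!_cons (a : α) (h : l ≠ []) : (a :: l).getLast! = l.getLast! := by
  cases l with
  | nil => contradiction
  | cons b t => exact List.getLast!_of_getLast? (by simpa using getLast?_eq_some_getLast! h)

theorem head!_reverse (h : l ≠ []) : l.reverse.head! = l.getLast! :=
  List.head!_of_head? (by rw [List.head?_reverse, getLast?_eq_some_getLast! h])

theorem getLast!_reverse (h : l ≠ []) : l.reverse.getLast! = l.head! :=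
  List.getLast!_of_getLast? (by rw [List.getLast?_reverse, head?_eq_some_head! h])

theorem isChain_flatten_iff {R : α → α → Prop} {L : List (List α)} (hL : [] ∉ L) :
    L.flatten.IsChain R ↔
      (∀ l ∈ L, l.IsChain R) ∧ L.IsChain (fun l l' => R l.getLast! l'.head!) := by
  rw [List.isChain_flatten hL]
  refine and_congr_right fun _ => List.IsChain.iff_of_mem_imp fun l l' hl hl' => ?_
  rw [getLast?_eq_some_getLast! (ne_of_mem_of_not_mem hl hL),
    head?_eq_some_head! (ne_of_mem_of_not_mem hl' hL)]
  simp

end Lists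

theorem eq_range_of_isChain_lt {l : List ℕ} {n : ℕ} (h : l.IsChain (· < ·))
    (hl : l.Perm (List.range n)) : l = List.range n :=
  hl.eq_of_sortedLE h.sortedLT.sortedLE (List.sortedLT_range n).sortedLE

section ConsecutiveDecreasing

variable {r : List ℕ}

theorem getLast!_le_head!_of_isChain_eq_succ (h : r.IsChain fun a b => a = b + 1) :
    r.getLast! ≤ r.head! := by
  induction r with
  | nil => rfl
  | cons a t ih =>
    cases t with
    | nil => simp
    | cons b t =>
      rw [List.isChain_cons_cons] at h
      have hb := ih h.2
      rw [List.head!_cons] at hb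
      rw [getLast!_cons a (List.cons_ne_nil b t), List.head!_cons]
      omega

theorem mem_of_isChain_eq_succ (h : r.IsChain fun a b => a = b + 1) (hr : r ≠ []) {x : ℕ}
    (hlast : r.getLast! ≤ x) (hhead : x ≤ r.head!) : x ∈ r := by
  induction r with
  | nil => contradiction
  | cons a t ih =>
    rw [List.head!_cons] at hhead
    cases t with
    | nil =>
      simp_all
      omega
    | cons b t =>
      rw [List.isChain_cons_cons] at h
      rw [getLast!_cons a (List.cons_ne_nil b t)] at hlast
      rcases Nat.lt_or_ge x a with hx | hx
      · exact List.mem_cons_of_mem a (ih h.2 (List.cons_ne_nil b t) hlast (by simp; omega))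
      · exact le_antisymm hhead hx ▸ List.mem_cons_self

theorem head!_lt_getLast!_of_disjoint {r' : List ℕ} (h : r.IsChain fun a b => a = b + 1)
    (h' : r'.IsChain fun a b => a = b + 1) (hr : r ≠ []) (hr' : r' ≠ []) (hd : r.Disjoint r')
    (hle : r.getLast! ≤ r'.head!) : r.head! < r'.getLast! := by
  -- otherwise `max r.getLast! r'.getLast!` lies in both lists
  by_contra! hge
  have hr_le := getLast!_le_head!_of_isChain_eq_succ h
  have hr'_le := getLast!_le_head!_of_isChain_eq_succ h'
  exact hd (mem_of_isChain_eq_succ h hr (le_max_left _ _) (max_le hr_le hge))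
    (mem_of_isChain_eq_succ h' hr' (le_max_right _ _) (max_le hle hr'_le))

end ConsecutiveDecreasing

section Runs

theorem nil_not_mem_runs (l : List ℕ) : [] ∉ runs l := by
  induction l with
  | nil => simp [runs]
  | cons a t ih =>
    cases h : runs t with
    | nil => simp [runs, h]
    | cons r rs =>
      rw [h] at ih
      simp only [runs, h]
      split_ifs <;> simp_all

theorem ne_nil_of_mem_runs {l r : List ℕ} (hr : r ∈ runs l) : r ≠ [] :=
  ne_of_mem_of_not_mem hr (nil_not_mem_runs l)

theorem flatten_runs (l : List ℕ) : (runs l).flatten = l := by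
  induction l with
  | nil => rfl
  | cons a t ih =>
    cases h : runs t with
    | nil => simp_all [runs]
    | cons r rs =>
      rw [h] at ih
      simp only [runs, h]
      split_ifs <;> simp_all

theorem isChain_gt_of_mem_runs {l r : List ℕ} (hr : r ∈ runs l) : r.IsChain (· > ·) := by
  induction l generalizing r with
  | nil => simp [runs] at hr
  | cons a t ih =>
    cases h : runs t with
    | nil => simp_all [runs]
    | cons s rs =>
      have hs : s ≠ [] := ne_nil_of_mem_runs (h ▸ List.mem_cons_self)
      simp only [runs, h] at hr
      split_ifs at hr with hlt
      · rcases List.mem_cons.1 hr with rfl | hr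
        · exact (ih (h ▸ List.mem_cons_self)).cons (by simp [head?_eq_some_head! hs, hlt])
        · exact ih (h ▸ List.mem_cons_of_mem s hr)
      · rcases List.mem_cons.1 hr with rfl | hr
        · exact List.isChain_singleton a
        · exact ih (h ▸ hr)

theorem isChain_runs_getLast!_le_head! (l : List ℕ) :
    (runs l).IsChain fun r r' => r.getLast! ≤ r'.head! := by
  induction l with
  | nil => exact List.IsChain.nil
  | cons a t ih =>
    cases h : runs t with
    | nil => simp [runs, h]
    | cons r rs =>
      rw [h] at ih
      have hr : r ≠ [] := ne_nil_of_mem_runs (h ▸ List.mem_cons_self)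
      simp only [runs, h]
      split_ifs with hlt
      · cases rs with
        | nil => exact List.isChain_singleton _
        | cons r' rs =>
          rw [List.isChain_cons_cons] at ih ⊢
          exact ⟨getLast!_cons a hr ▸ ih.1, ih.2⟩
      · exact ih.cons_cons (by simpa using hlt)

theorem isChain_iff_runs {R : ℕ → ℕ → Prop} {l : List ℕ} :
    l.IsChain R ↔
      (∀ r ∈ runs l, r.IsChain R) ∧ (runs l).IsChain fun r r' => R r.getLast! r'.head! := by
  conv_lhs => rw [← flatten_runs l]
  exact isChain_flatten_iff (nil_not_mem_runs l)

theorem isChain_popL_iff {R : ℕ → ℕ → Prop} {l : List ℕ} :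
    (popL l).IsChain R ↔
      (∀ r ∈ runs l, r.IsChain fun a b => R b a) ∧
        (runs l).IsChain fun r r' => R r.head! r'.getLast! := by
  have hL : [] ∉ (runs l).map List.reverse := by
    simpa using nil_not_mem_runs l
  rw [popL, isChain_flatten_iff hL, List.forall_mem_map, List.isChain_map]
  refine and_congr (forall₂_congr fun r _ => List.isChain_reverse) ?_
  refine List.IsChain.iff_of_mem_imp fun r r' hr hr' => ?_
  rw [getLast!_reverse (ne_nil_of_mem_runs hr), head!_reverse (ne_nil_of_mem_runs hr')]

theorem popL_perm (l : List ℕ) : (popL l).Perm l := by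
  have h := List.Perm.flatMap_left (runs l) (g := id) fun r _ => List.reverse_perm r
  rwa [List.flatMap_id, flatten_runs] at h

end Runs

theorem popL_eq_range_iff {n : ℕ} {v : List ℕ} (hv : v.Perm (List.range n)) :
    popL v = List.range n ↔ v.IsChain fun a b => a ≤ b + 1 := by
  constructor
  · intro h
    have hsucc : (popL v).IsChain fun a b => b = a + 1 :=
      h ▸ (List.isChain_range _ n).2 fun _ _ => rfl
    refine isChain_iff_runs.2 ⟨fun r hr => ?_, ?_⟩
    · exact ((isChain_popL_iff.1 hsucc).1 r hr).imp fun _ _ h => h.le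
    · exact (isChain_runs_getLast!_le_head! v).imp fun _ _ h => h.trans (Nat.le_succ _)
  · intro hc
    have hsucc : ∀ r ∈ runs v, r.IsChain fun a b => a = b + 1 := fun r hr =>
      (isChain_and.2 ⟨isChain_gt_of_mem_runs hr, (isChain_iff_runs.1 hc).1 r hr⟩).imp
        fun _ _ h => by omega
    have hdisj : (runs v).IsChain List.Disjoint := by
      have hnd : (runs v).flatten.Nodup := (flatten_runs v).symm ▸ hv.nodup_iff.2 List.nodup_range
      exact (List.nodup_flatten.1 hnd).2.isChain
    have hblocks : (runs v).IsChain fun r r' => r.head! < r'.getLast! :=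
      (isChain_and.2 ⟨isChain_runs_getLast!_le_head! v, hdisj⟩).imp_of_mem_imp
        fun r r' hr hr' h => head!_lt_getLast!_of_disjoint (hsucc r hr) (hsucc r' hr')
          (ne_nil_of_mem_runs hr) (ne_nil_of_mem_runs hr') h.2 h.1
    exact eq_range_of_isChain_lt
      (isChain_popL_iff.2 ⟨fun r hr => isChain_gt_of_mem_runs hr, hblocks⟩)
      ((popL_perm v).trans hv)

/-- a permutation `w ∈ Sₙ` (written in one-line notation as a list that
is a permutation of `{0, …, n-1}`) is 2-pop-stack-sortable iff for every pair of
consecutive descending runs, the largest entry of the first run is at most `1` more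
than the smallest entry of the next run. -/
theorem two_pop_stack_sortable_iff (n : ℕ) (l : List ℕ) (hl : l.Perm (List.range n)) :
    popL (popL l) = List.range n ↔
      List.Chain' (fun r r' => r.head! ≤ r'.getLast! + 1) (runs l) := by
  rw [popL_eq_range_iff ((popL_perm l).trans hl), isChain_popL_iff]
  have hblocks : ∀ r ∈ runs l, r.IsChain fun a b => b ≤ a + 1 := fun r hr =>
    (isChain_gt_of_mem_runs hr).imp fun _ _ h => h.le.trans (Nat.le_succ _)
  exact and_iff_right hblocks

end PopList
end

section
/- For every affine permutation w ∈ S̃_n, every descending run of Pop(w) has length at most 3, where Pop reverses each descending run of w. -/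
namespace AffinePop

/-- `w` is an affine permutation of size `n`: a bijection `ℤ → ℤ` commuting with
translation by `n` and normalized so that `∑_{i=1}^n w(i) = n(n+1)/2`. -/
def IsAffinePerm (n : ℕ) (w : ℤ → ℤ) : Prop :=
  Function.Bijective w ∧ (∀ i : ℤ, w (i + n) = w i + n) ∧
    2 * (∑ i ∈ Finset.Icc (1 : ℤ) (n : ℤ), w i) = n * (n + 1)

/-- `a i` and `b i` are the left and right endpoints of the maximal descending run of
`w` containing position `i`: `w` is strictly decreasing on `[a i, b i]` and ascends
just outside it. -/
def IsRunBounds (w : ℤ → ℤ) (a b : ℤ → ℤ) : Prop :=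
  ∀ i : ℤ, a i ≤ i ∧ i ≤ b i ∧
    (∀ j : ℤ, a i ≤ j → j < b i → w (j + 1) < w j) ∧
    w (a i - 1) < w (a i) ∧ w (b i) < w (b i + 1)

/-- `v` is obtained from `w` by reversing every maximal descending run of `w` (keeping
entries in distinct runs in the same relative order); this is the pop-stack-sorting
map on affine permutations. -/
def PopRel (w v : ℤ → ℤ) : Prop :=
  ∃ a b : ℤ → ℤ, IsRunBounds w a b ∧ ∀ i : ℤ, v i = w (a i + b i - i)

/-!
A descent of `Pop(w)` at `i` can only occur between two runs of `w`, since inside a run the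
reversed entries ascend. Three consecutive descents at `i, i+1, i+2` therefore make `i+1`
and `i+2` singleton runs of `w`; these are fixed by `Pop`, and `w` ascends from the end of one
run to the start of the next, so `Pop(w)` ascends at `i+1`.
-/

namespace IsRunBounds

variable {w a b : ℤ → ℤ} {i j : ℤ}

lemma left_eq_of_mem (hab : IsRunBounds w a b) (hij : a i ≤ j) (hji : j ≤ b i) :
    a j = a i := by
  obtain ⟨hai, hbi, hdeci, hlefti, -⟩ := hab i
  obtain ⟨haj, hbj, hdecj, hleftj, -⟩ := hab j
  rcases lt_trichotomy (a j) (a i) with hlt | heq | hgt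
  · have := hdecj (a i - 1) (by omega) (by omega)
    rw [sub_add_cancel] at this
    exact absurd hlefti this.not_gt
  · exact heq
  · have := hdeci (a j - 1) (by omega) (by omega)
    rw [sub_add_cancel] at this
    exact absurd hleftj this.not_gt

lemma right_eq_of_mem (hab : IsRunBounds w a b) (hij : a i ≤ j) (hji : j ≤ b i) :
    b j = b i := by
  obtain ⟨hai, hbi, hdeci, -, hrighti⟩ := hab i
  obtain ⟨haj, hbj, hdecj, -, hrightj⟩ := hab j
  rcases lt_trichotomy (b j) (b i) with hlt | heq | hgt
  · exact absurd hrightj (hdeci (b j) (by omega) hlt).not_gt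
  · exact heq
  · exact absurd hrighti (hdecj (b i) (by omega) hgt).not_gt

variable {v : ℤ → ℤ}

lemma right_eq_self_of_descent (hab : IsRunBounds w a b)
    (hv : ∀ i, v i = w (a i + b i - i)) (hd : v (i + 1) < v i) : b i = i := by
  obtain ⟨hai, hbi, hdeci, -⟩ := hab i
  by_contra hne
  have hsucc : i + 1 ≤ b i := by omega
  have hasc := hdeci (a i + b i - (i + 1)) (by omega) (by omega)
  rw [show a i + b i - (i + 1) + 1 = a i + b i - i by ring] at hasc
  rw [hv, hv, hab.left_eq_of_mem (by omega) hsucc, hab.right_eq_of_mem (by omega) hsucc] at hd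
  exact absurd hd hasc.not_gt

lemma left_eq_self_of_descent (hab : IsRunBounds w a b)
    (hv : ∀ i, v i = w (a i + b i - i)) (hd : v (i + 1) < v i) : a (i + 1) = i + 1 := by
  have hbi := hab.right_eq_self_of_descent hv hd
  obtain ⟨hai, hbi', -⟩ := hab (i + 1)
  by_contra hne
  have := hab.right_eq_of_mem (i := i + 1) (j := i) (by omega) (by omega)
  omega

lemma apply_eq_of_descent_of_descent (hab : IsRunBounds w a b)
    (hv : ∀ i, v i = w (a i + b i - i)) (hd : v (i + 1) < v i) (hd' : v (i + 2) < v (i + 1)) :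
    v (i + 1) = w (i + 1) := by
  have ha := hab.left_eq_self_of_descent hv hd
  have hb := hab.right_eq_self_of_descent hv (i := i + 1) (by rwa [add_assoc, one_add_one_eq_two])
  rw [hv, ha, hb, add_sub_cancel_right]

end IsRunBounds

theorem pop_affine_run_length_le_three_general (w v : ℤ → ℤ)
    (hv : PopRel w v) :
    ∀ i : ℤ, ¬ (v (i + 1) < v i ∧ v (i + 2) < v (i + 1) ∧ v (i + 3) < v (i + 2)) := by
  obtain ⟨a, b, hab, hv⟩ := hv
  rintro i ⟨hd₀, hd₁, hd₂⟩
  have hd₁' : v (i + 1 + 1) < v (i + 1) := by rwa [add_assoc, one_add_one_eq_two]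
  have hd₂' : v (i + 1 + 2) < v (i + 1 + 1) := by
    rwa [add_assoc, add_assoc, one_add_one_eq_two, show (1 : ℤ) + 2 = 3 by norm_num]
  have hw₁ := hab.apply_eq_of_descent_of_descent hv hd₀ hd₁
  have hw₂ := hab.apply_eq_of_descent_of_descent hv hd₁' hd₂'
  have hb₁ := hab.right_eq_self_of_descent hv hd₁'
  have hasc := (hab (i + 1)).2.2.2.2
  rw [hb₁] at hasc
  rw [hw₂, hw₁] at hd₁'
  exact absurd hasc hd₁'.not_gt

/-- for every affine permutation `w ∈ S̃ₙ`, every descending run of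
`Pop(w)` has length at most `3`, i.e. `Pop(w)` has no three consecutive descents. -/
theorem pop_affine_run_length_le_three (n : ℕ) (hn : 1 ≤ n) (w v : ℤ → ℤ)
    (hw : IsAffinePerm n w) (hv : PopRel w v) :
    ∀ i : ℤ, ¬ (v (i + 1) < v i ∧ v (i + 2) < v (i + 1) ∧ v (i + 3) < v (i + 2)) :=
  pop_affine_run_length_le_three_general w v hv

end AffinePop
end

section
/- Let w be a permutation in S_{2n} viewed as a subgroup element of the hyperoctahedral group B_n (i.e., w₀ w w₀ = w, where w₀ is the longest element of S_{2n}). Then Pop_{S_{2n}}(w) = Pop_{B_n}(w): the pop-stack-sorting map on S_{2n} restricted to B_n coincides with the Coxeter pop-stack-sorting operator of B_n. -/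
/-!
Write `≤` for the right weak order. The descents of `w ∈ B_n` in `S_{2n}` come in mirror pairs
`{i, 2n-2-i}`, and each `B_n`-generator `sᵢᴮ` is either a commuting product `sᵢ s_{2n-2-i}` of
such a pair or the middle `s_{n-1}`. Length additivity shows that lying below `w sᵢ` and
`w s_{2n-2-i}` implies lying below `w sᵢ s_{2n-2-i}`, and `w sᵢ s_{2n-2-i} ≤ w sᵢ`; so both
target sets have the same lower bounds. The `S_{2n}`-meet is fixed by conjugation with `w₀`,
since its target set is, so it lies in `B_n`; the two meets are then lower bounds of each
other's targets.
-/

namespace HyperPop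

/-- The number of inversions of a permutation of `Fin m` (its Coxeter length). -/
def invCount {m : ℕ} (w : Equiv.Perm (Fin m)) : ℕ :=
  (Finset.univ.filter (fun p : Fin m × Fin m => p.1 < p.2 ∧ w p.2 < w p.1)).card

/-- The right weak order on `S_m`: `x ≤_R y` iff `ℓ(x) + ℓ(x⁻¹y) = ℓ(y)`. -/
def rweak {m : ℕ} (x y : Equiv.Perm (Fin m)) : Prop :=
  invCount x + invCount (x⁻¹ * y) = invCount y

/-- The adjacent transposition `s_i` swapping positions `i` and `i+1`. -/
def adjSwap (m i : ℕ) (h : i + 1 < m) : Equiv.Perm (Fin m) :=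
  Equiv.swap ⟨i, by omega⟩ ⟨i + 1, h⟩

/-- The hyperoctahedral group `B_n` realized inside `S_{2n}`: the permutations whose
plot is invariant under 180° rotation, i.e. those fixed by `w ↦ w₀ww₀`. -/
def hyperoctahedral (n : ℕ) : Set (Equiv.Perm (Fin (2 * n))) :=
  {w | ∀ i : Fin (2 * n), w (Fin.rev i) = Fin.rev (w i)}

/-- The simple generators `sᵢᴮ` of `B_n ⊆ S_{2n}` (indices `0 ≤ i ≤ n-1`, 0-indexed):
`sᵢᴮ = sᵢ · s_{2n-2-i}` for `i < n-1`, and `s_{n-1}ᴮ = s_{n-1}`. -/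
def bGen (n i : ℕ) (hn : 1 ≤ n) (h : i < n) : Equiv.Perm (Fin (2 * n)) :=
  if hi : i + 1 < n then
    adjSwap (2 * n) i (by omega) * adjSwap (2 * n) (2 * n - 2 - i) (by omega)
  else adjSwap (2 * n) i (by omega)

/-- The set `{w · s : s a right descent of w in S_{2n}} ∪ {w}`. -/
def targetsA {m : ℕ} (w : Equiv.Perm (Fin m)) : Set (Equiv.Perm (Fin m)) :=
  insert w {v | ∃ (i : ℕ) (h : i + 1 < m),
    w ⟨i + 1, h⟩ < w ⟨i, by omega⟩ ∧ v = w * adjSwap m i h}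

/-- The set `{w · sᵢᴮ : sᵢᴮ a right descent of w in B_n} ∪ {w}`. -/
def targetsB (n : ℕ) (hn : 1 ≤ n) (w : Equiv.Perm (Fin (2 * n))) :
    Set (Equiv.Perm (Fin (2 * n))) :=
  insert w {v | ∃ (i : ℕ) (h : i < n),
    w ⟨i + 1, by omega⟩ < w ⟨i, by omega⟩ ∧ v = w * bGen n i hn h}

/-- `z` is the meet of `A` in the right weak order restricted to `C`. -/
def IsMeetOn {m : ℕ} (C : Set (Equiv.Perm (Fin m))) (A : Set (Equiv.Perm (Fin m)))
    (z : Equiv.Perm (Fin m)) : Prop :=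
  z ∈ C ∧ (∀ a ∈ A, rweak z a) ∧
    ∀ u ∈ C, (∀ a ∈ A, rweak u a) → rweak u z

open Equiv Finset

section WeakOrder

variable {m : ℕ}

def inversions (w : Perm (Fin m)) : Finset (Fin m × Fin m) :=
  univ.filter fun p => p.1 < p.2 ∧ w p.2 < w p.1

lemma mem_inversions {w : Perm (Fin m)} {p : Fin m × Fin m} :
    p ∈ inversions w ↔ p.1 < p.2 ∧ w p.2 < w p.1 := by
  simp [inversions]

lemma invCount_eq_card_inversions (w : Perm (Fin m)) : invCount w = #(inversions w) := rfl

lemma invCount_one : invCount (1 : Perm (Fin m)) = 0 := by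
  simp only [invCount_eq_card_inversions, card_eq_zero, eq_empty_iff_forall_notMem,
    mem_inversions, Perm.one_apply]
  exact fun p h => h.1.not_gt h.2

lemma eq_one_of_invCount_eq_zero {u : Perm (Fin m)} (h : invCount u = 0) : u = 1 := by
  rw [invCount_eq_card_inversions, card_eq_zero] at h
  have hmono : StrictMono u := fun a b hab =>
    (u.injective.ne hab.ne).lt_of_le <| not_lt.1 fun hba => by
      simpa [h] using (mem_inversions (p := (a, b))).2 ⟨hab, hba⟩
  exact Perm.ext fun a => hmono.apply_eq

lemma inversions_mul_subset (u v : Perm (Fin m)) :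
    inversions (u * v) ⊆
      inversions v ∪ (inversions u).image fun p => (v⁻¹ p.1, v⁻¹ p.2) := by
  rintro ⟨a, b⟩ h
  rw [mem_inversions] at h
  rcases lt_or_gt_of_ne (v.injective.ne h.1.ne) with hv | hv
  · exact mem_union_right _ <| mem_image.2 ⟨(v a, v b), mem_inversions.2 ⟨hv, h.2⟩, by simp⟩
  · exact mem_union_left _ <| mem_inversions.2 ⟨h.1, hv⟩

lemma invCount_mul_le (u v : Perm (Fin m)) : invCount (u * v) ≤ invCount u + invCount v :=
  calc invCount (u * v)
      ≤ #(inversions v ∪ (inversions u).image fun p => (v⁻¹ p.1, v⁻¹ p.2)) :=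
        card_le_card (inversions_mul_subset u v)
    _ ≤ invCount v + invCount u := (card_union_le _ _).trans (Nat.add_le_add_left card_image_le _)
    _ = invCount u + invCount v := Nat.add_comm _ _

lemma rweak_trans {x y z : Perm (Fin m)} (hxy : rweak x y) (hyz : rweak y z) : rweak x z := by
  have h₁ := invCount_mul_le (x⁻¹ * y) (y⁻¹ * z)
  have h₂ := invCount_mul_le x (x⁻¹ * z)
  rw [mul_assoc, mul_inv_cancel_left] at h₁
  rw [mul_inv_cancel_left] at h₂
  unfold rweak at *
  omega

lemma rweak_antisymm {x y : Perm (Fin m)} (hxy : rweak x y) (hyx : rweak y x) : x = y := by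
  have h₁ := invCount_mul_le x (x⁻¹ * y)
  have h₂ := invCount_mul_le y (y⁻¹ * x)
  rw [mul_inv_cancel_left] at h₁ h₂
  unfold rweak at *
  exact inv_mul_eq_one.1 (eq_one_of_invCount_eq_zero (by omega))

end WeakOrder

section AdjacentSwaps

variable {m : ℕ}

lemma adjSwap_val {i : ℕ} (h : i + 1 < m) (x : Fin m) :
    (adjSwap m i h x : ℕ) = if (x : ℕ) = i then i + 1 else if (x : ℕ) = i + 1 then i else x := by
  simp only [adjSwap, swap_apply_def, Fin.ext_iff]
  split_ifs <;> simp_all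

lemma adjSwap_apply_adjSwap {i : ℕ} (h : i + 1 < m) (x : Fin m) :
    adjSwap m i h (adjSwap m i h x) = x :=
  swap_apply_self _ _ _

lemma mul_adjSwap_apply_of_ne (w : Perm (Fin m)) {i : ℕ} (h : i + 1 < m) {x : Fin m}
    (h₁ : (x : ℕ) ≠ i) (h₂ : (x : ℕ) ≠ i + 1) : (w * adjSwap m i h) x = w x :=
  congrArg w <| swap_apply_of_ne_of_ne (Fin.ne_of_val_ne h₁) (Fin.ne_of_val_ne h₂)

lemma adjSwap_lt_adjSwap {i : ℕ} (h : i + 1 < m) {a b : Fin m} (hab : a < b)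
    (hq : (a, b) ≠ (⟨i, by omega⟩, ⟨i + 1, h⟩)) :
    adjSwap m i h a < adjSwap m i h b ∧
      (adjSwap m i h a, adjSwap m i h b) ≠ (⟨i, by omega⟩, ⟨i + 1, h⟩) := by
  simp only [ne_eq, Prod.ext_iff, Fin.ext_iff, Fin.lt_def, adjSwap_val] at hab hq ⊢
  split_ifs <;> omega

lemma card_inversions_mul_adjSwap_erase (w : Perm (Fin m)) {i : ℕ} (h : i + 1 < m) :
    #((inversions (w * adjSwap m i h)).erase (⟨i, by omega⟩, ⟨i + 1, h⟩)) =
      #((inversions w).erase (⟨i, by omega⟩, ⟨i + 1, h⟩)) := by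
  set s := adjSwap m i h
  have maps : ∀ v : Perm (Fin m), ∀ p ∈ (inversions v).erase (⟨i, by omega⟩, ⟨i + 1, h⟩),
      (s p.1, s p.2) ∈ (inversions (v * s)).erase (⟨i, by omega⟩, ⟨i + 1, h⟩) := by
    intro v p hp
    rw [mem_erase, mem_inversions] at hp ⊢
    obtain ⟨hlt, hne⟩ := adjSwap_lt_adjSwap h hp.2.1 hp.1
    exact ⟨hne, hlt, by simpa [s, adjSwap_apply_adjSwap] using hp.2.2⟩
  refine card_nbij' (fun p => (s p.1, s p.2)) (fun p => (s p.1, s p.2)) ?_ (maps w) ?_ ?_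
  · intro p hp
    have hss : w * s * s = w := by simp [s, mul_assoc, adjSwap, swap_mul_self]
    simpa only [hss, mem_coe] using maps (w * s) p hp
  all_goals intro p _; simp [s, adjSwap_apply_adjSwap]

lemma invCount_mul_adjSwap_of_lt (w : Perm (Fin m)) {i : ℕ} (h : i + 1 < m)
    (hasc : w ⟨i, by omega⟩ < w ⟨i + 1, h⟩) :
    invCount (w * adjSwap m i h) = invCount w + 1 := by
  have hmem : (⟨i, by omega⟩, ⟨i + 1, h⟩) ∈ inversions (w * adjSwap m i h) := by
    refine mem_inversions.2 ⟨Fin.mk_lt_mk.2 i.lt_succ_self, ?_⟩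
    simpa [adjSwap] using hasc
  have hnotMem : (⟨i, by omega⟩, ⟨i + 1, h⟩) ∉ inversions w :=
    fun hq => (mem_inversions.1 hq).2.not_gt hasc
  rw [invCount_eq_card_inversions, invCount_eq_card_inversions, ← card_erase_add_one hmem,
    card_inversions_mul_adjSwap_erase, erase_eq_of_notMem hnotMem]

lemma invCount_mul_adjSwap_of_gt (w : Perm (Fin m)) {i : ℕ} (h : i + 1 < m)
    (hdesc : w ⟨i + 1, h⟩ < w ⟨i, by omega⟩) :
    invCount (w * adjSwap m i h) + 1 = invCount w := by
  have := invCount_mul_adjSwap_of_lt (w * adjSwap m i h) h (by simpa [adjSwap] using hdesc)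
  rwa [mul_assoc, adjSwap, swap_mul_self, mul_one, eq_comm] at this

lemma invCount_adjSwap {i : ℕ} (h : i + 1 < m) : invCount (adjSwap m i h) = 1 := by
  simpa [invCount_one] using invCount_mul_adjSwap_of_lt 1 h (Fin.mk_lt_mk.2 i.lt_succ_self)

lemma lt_of_invCount_mul_adjSwap_lt (w : Perm (Fin m)) {i : ℕ} (h : i + 1 < m)
    (hlt : invCount (w * adjSwap m i h) < invCount w) :
    w ⟨i + 1, h⟩ < w ⟨i, by omega⟩ := by
  refine lt_of_le_of_ne (not_lt.1 fun hasc => ?_) (w.injective.ne (by simp))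
  have := invCount_mul_adjSwap_of_lt w h hasc
  omega

lemma adjSwap_mul_comm {i j : ℕ} (hi : i + 1 < m) (hj : j + 1 < m) (hij : i + 1 < j) :
    adjSwap m i hi * adjSwap m j hj = adjSwap m j hj * adjSwap m i hi :=
  (Perm.disjoint_swap_swap (by simp [Fin.ext_iff]; omega)).commute

lemma mul_adjSwap_lt_of_far (w : Perm (Fin m)) {i j : ℕ} (hi : i + 1 < m) (hj : j + 1 < m)
    (hij : i + 1 < j ∨ j + 1 < i) (hdesc : w ⟨j + 1, hj⟩ < w ⟨j, by omega⟩) :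
    (w * adjSwap m i hi) ⟨j + 1, hj⟩ < (w * adjSwap m i hi) ⟨j, by omega⟩ := by
  rwa [mul_adjSwap_apply_of_ne w hi (by simp; omega) (by simp; omega),
    mul_adjSwap_apply_of_ne w hi (by simp; omega) (by simp; omega)]

end AdjacentSwaps

section Descents

variable {m : ℕ}

lemma rweak_mul_adjSwap_of_gt (w : Perm (Fin m)) {i : ℕ} (h : i + 1 < m)
    (hdesc : w ⟨i + 1, h⟩ < w ⟨i, by omega⟩) : rweak (w * adjSwap m i h) w := by
  rw [rweak, mul_inv_rev, mul_assoc, inv_mul_cancel, mul_one, adjSwap, swap_inv, ← adjSwap,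
    invCount_adjSwap]
  exact invCount_mul_adjSwap_of_gt w h hdesc

/-- `z` lies below `w`, and `sᵢ`, `sⱼ` are then descents of `z⁻¹ w`, so lengths add up. -/
lemma rweak_mul_adjSwap_mul_adjSwap {z w : Perm (Fin m)} {i j : ℕ} (hi : i + 1 < m)
    (hj : j + 1 < m) (hij : i + 1 < j)
    (hdi : w ⟨i + 1, hi⟩ < w ⟨i, by omega⟩) (hdj : w ⟨j + 1, hj⟩ < w ⟨j, by omega⟩)
    (hzi : rweak z (w * adjSwap m i hi)) (hzj : rweak z (w * adjSwap m j hj)) :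
    rweak z (w * adjSwap m i hi * adjSwap m j hj) := by
  have hzw : rweak z w := rweak_trans hzi (rweak_mul_adjSwap_of_gt w hi hdi)
  have hwi := invCount_mul_adjSwap_of_gt w hi hdi
  have hwj := invCount_mul_adjSwap_of_gt w hj hdj
  have hwij := invCount_mul_adjSwap_of_gt _ hj (mul_adjSwap_lt_of_far w hi hj (.inl hij) hdj)
  unfold rweak at hzw hzi hzj ⊢
  rw [← mul_assoc] at hzi hzj
  rw [← mul_assoc, ← mul_assoc]
  set x := z⁻¹ * w
  have hxi := lt_of_invCount_mul_adjSwap_lt x hi (by omega)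
  have hxj := lt_of_invCount_mul_adjSwap_lt x hj (by omega)
  have hxi' := invCount_mul_adjSwap_of_gt x hi hxi
  have hxij := invCount_mul_adjSwap_of_gt _ hj (mul_adjSwap_lt_of_far x hi hj (.inl hij) hxj)
  omega

end Descents

section Reversal

variable {m : ℕ}

lemma conj_revPerm_apply (u : Perm (Fin m)) (x : Fin m) :
    MulAut.conj Fin.revPerm u x = (u x.rev).rev := rfl

lemma conj_revPerm_conj_revPerm (u : Perm (Fin m)) :
    MulAut.conj Fin.revPerm (MulAut.conj Fin.revPerm u) = u := by
  ext x
  simp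

lemma invCount_conj_revPerm (u : Perm (Fin m)) :
    invCount (MulAut.conj Fin.revPerm u) = invCount u := by
  refine card_nbij' (fun p => (p.2.rev, p.1.rev)) (fun p => (p.2.rev, p.1.rev)) ?_ ?_ ?_ ?_
  · intro p hp; simpa [mem_inversions, conj_revPerm_apply] using hp
  · intro p hp; simpa [mem_inversions, conj_revPerm_apply] using hp
  all_goals intro p _; simp

lemma rweak_conj_revPerm {x y : Perm (Fin m)} (h : rweak x y) :
    rweak (MulAut.conj Fin.revPerm x) (MulAut.conj Fin.revPerm y) := by
  rwa [rweak, ← map_inv, ← map_mul, invCount_conj_revPerm, invCount_conj_revPerm,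
    invCount_conj_revPerm]

lemma conj_revPerm_adjSwap {i : ℕ} (h : i + 1 < m) :
    MulAut.conj Fin.revPerm (adjSwap m i h) = adjSwap m (m - 2 - i) (by omega) := by
  ext x
  simp only [conj_revPerm_apply, Fin.val_rev, adjSwap_val]
  split_ifs <;> omega

lemma conj_revPerm_lt_of_gt (w : Perm (Fin m)) {i : ℕ} (h : i + 1 < m)
    (hdesc : w ⟨i + 1, h⟩ < w ⟨i, by omega⟩) :
    MulAut.conj Fin.revPerm w ⟨m - 2 - i + 1, by omega⟩ <
      MulAut.conj Fin.revPerm w ⟨m - 2 - i, by omega⟩ := by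
  have e₁ : (⟨m - 2 - i + 1, by omega⟩ : Fin m).rev = ⟨i, by omega⟩ := by ext; simp; omega
  have e₂ : (⟨m - 2 - i, by omega⟩ : Fin m).rev = ⟨i + 1, h⟩ := by ext; simp; omega
  rwa [conj_revPerm_apply, conj_revPerm_apply, e₁, e₂, Fin.rev_lt_rev]

lemma conj_revPerm_mem_targetsA {w a : Perm (Fin m)} (ha : a ∈ targetsA w) :
    MulAut.conj Fin.revPerm a ∈ targetsA (MulAut.conj Fin.revPerm w) := by
  obtain rfl | ⟨i, h, hdesc, rfl⟩ := ha
  · exact Set.mem_insert _ _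
  · exact Or.inr ⟨m - 2 - i, by omega, conj_revPerm_lt_of_gt w h hdesc,
      by rw [map_mul, conj_revPerm_adjSwap]⟩

/-- The meet is unique, and reversal permutes `targetsA w` when it fixes `w`. -/
lemma conj_revPerm_eq_of_isMeetOn_targetsA {w z : Perm (Fin m)}
    (hw : MulAut.conj Fin.revPerm w = w) (hz : IsMeetOn Set.univ (targetsA w) z) :
    MulAut.conj Fin.revPerm z = z := by
  have hlb : ∀ a ∈ targetsA w, rweak (MulAut.conj Fin.revPerm z) a := fun a ha => by
    have := hz.2.1 _ (hw ▸ conj_revPerm_mem_targetsA ha)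
    simpa only [conj_revPerm_conj_revPerm] using rweak_conj_revPerm this
  have hle := hz.2.2 _ trivial hlb
  have hge := rweak_conj_revPerm hle
  rw [conj_revPerm_conj_revPerm] at hge
  exact rweak_antisymm hle hge

end Reversal

section Hyperoctahedral

variable {n : ℕ}

lemma mem_hyperoctahedral_iff {w : Perm (Fin (2 * n))} :
    w ∈ hyperoctahedral n ↔ MulAut.conj Fin.revPerm w = w := by
  simp only [hyperoctahedral, Set.mem_ofPred_eq, Perm.ext_iff, conj_revPerm_apply,
    Fin.rev_eq_iff]

lemma lt_of_mem_hyperoctahedral {w : Perm (Fin (2 * n))} (hw : w ∈ hyperoctahedral n)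
    {i : ℕ} (h : i + 1 < 2 * n) (hdesc : w ⟨i + 1, h⟩ < w ⟨i, by omega⟩) :
    w ⟨2 * n - 2 - i + 1, by omega⟩ < w ⟨2 * n - 2 - i, by omega⟩ := by
  simpa only [mem_hyperoctahedral_iff.1 hw] using conj_revPerm_lt_of_gt w h hdesc

lemma bGen_eq_of_lt (hn : 1 ≤ n) {i j : ℕ} (h : i < n) (hi : i + 1 < n)
    (hij : i + j + 2 = 2 * n) :
    bGen n i hn h = adjSwap (2 * n) i (by omega) * adjSwap (2 * n) j (by omega) := by
  obtain rfl : j = 2 * n - 2 - i := by omega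
  simp [bGen, hi]

lemma bGen_eq_of_succ_eq (hn : 1 ≤ n) {i : ℕ} (h : i < n) (hi : i + 1 = n) :
    bGen n i hn h = adjSwap (2 * n) i (by omega) := by
  simp [bGen, hi]

lemma rweak_targetsB_of_rweak_targetsA {z w : Perm (Fin (2 * n))} (hn : 1 ≤ n)
    (hw : w ∈ hyperoctahedral n) (hz : ∀ a ∈ targetsA w, rweak z a) :
    ∀ a ∈ targetsB n hn w, rweak z a := by
  rintro a (rfl | ⟨i, h, hdesc, rfl⟩)
  · exact hz _ (Set.mem_insert _ _)
  rcases (Nat.succ_le_of_lt h).lt_or_eq with hi | hi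
  · have hdesc' := lt_of_mem_hyperoctahedral hw _ hdesc
    rw [bGen_eq_of_lt hn h hi (j := 2 * n - 2 - i) (by omega), ← mul_assoc]
    exact rweak_mul_adjSwap_mul_adjSwap _ _ (by omega) hdesc hdesc'
      (hz _ (Or.inr ⟨_, _, hdesc, rfl⟩)) (hz _ (Or.inr ⟨_, _, hdesc', rfl⟩))
  · rw [bGen_eq_of_succ_eq hn h hi]
    exact hz _ (Or.inr ⟨_, _, hdesc, rfl⟩)

lemma rweak_targetsA_of_rweak_targetsB {z w : Perm (Fin (2 * n))} (hn : 1 ≤ n)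
    (hw : w ∈ hyperoctahedral n) (hz : ∀ a ∈ targetsB n hn w, rweak z a) :
    ∀ a ∈ targetsA w, rweak z a := by
  rintro a (rfl | ⟨i, h, hdesc, rfl⟩)
  · exact hz _ (Set.mem_insert _ _)
  have hdesc' := lt_of_mem_hyperoctahedral hw h hdesc
  rcases lt_trichotomy (i + 1) n with hi | hi | hi
  · have hzb := hz _ (Or.inr ⟨i, by omega, hdesc, rfl⟩)
    rw [bGen_eq_of_lt hn _ hi (j := 2 * n - 2 - i) (by omega), ← mul_assoc] at hzb
    exact rweak_trans hzb <| rweak_mul_adjSwap_of_gt _ _ <|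
      mul_adjSwap_lt_of_far w h _ (.inl (by omega)) hdesc'
  · exact hz _ (Or.inr ⟨i, by omega, hdesc, by rw [bGen_eq_of_succ_eq hn _ hi]⟩)
  · have hzb := hz _ (Or.inr ⟨2 * n - 2 - i, by omega, hdesc', rfl⟩)
    rw [bGen_eq_of_lt hn _ (by omega) (j := i) (by omega), adjSwap_mul_comm _ _ (by omega),
      ← mul_assoc] at hzb
    exact rweak_trans hzb <| rweak_mul_adjSwap_of_gt _ _ <|
      mul_adjSwap_lt_of_far w h _ (.inr (by omega)) hdesc'

end Hyperoctahedral

/-- for `w ∈ B_n ⊆ S_{2n}`, the pop-stack-sorting map of `S_{2n}`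
(the meet of `{ws : s ∈ D_R(w)} ∪ {w}` in the right weak order of `S_{2n}`) agrees
with the Coxeter pop-stack-sorting operator of `B_n` (the corresponding meet taken in
the right weak order of `B_n`). -/
theorem popA_eq_popB (n : ℕ) (hn : 1 ≤ n) (w zA zB : Equiv.Perm (Fin (2 * n)))
    (hw : w ∈ hyperoctahedral n)
    (hzA : IsMeetOn Set.univ (targetsA w) zA)
    (hzB : IsMeetOn (hyperoctahedral n) (targetsB n hn w) zB) :
    zA = zB := by
  have hzA_mem : zA ∈ hyperoctahedral n :=
    mem_hyperoctahedral_iff.2 <|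
      conj_revPerm_eq_of_isMeetOn_targetsA (mem_hyperoctahedral_iff.1 hw) hzA
  exact rweak_antisymm (hzB.2.2 zA hzA_mem (rweak_targetsB_of_rweak_targetsA hn hw hzA.2.1))
    (hzA.2.2 zB trivial (rweak_targetsA_of_rweak_targetsB hn hw hzB.2.1))

end HyperPop
end
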